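/- Let d ≥ 1, α ∈ (1, 2) and 0 < β < d. There exists a constant C > 0 (depending only on d, α, β) such that for every t > 0 and all x, w ∈ ℝ^d, ∫_{ℝ^d} ∫_{ℝ^d} min( t^{−d/α}, t/|x−y|^{α+d} ) · min( t^{−d/α}, t/|w−z|^{α+d} ) · |y−z|^{−β} dy dz ≤ C t^{−β/α}. -/

import Mathlib

/-!
Parabolic scaling reduces the bound to time `1`. With `r = t^(1/α)` the profile satisfies
`p_t(u) = t^(-d/α) p_1(u / r)` and the Riesz kernel is homogeneous of degree `-β`, so substituting
`y, z ↦ r y, r z` turns the double integral at time `t` into `t^(-β/α)` times the one at time `1`,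
with `x, w` rescaled. At time `1`, `p_1 ≤ 1` is integrable because it decays like `|u|^(-(α+d))`,
and splitting the `z`-integral at `|y - z| = 1` bounds it, uniformly in `y`, by
`∫_{|u|<1} |u|^(-β) + ∫ p_1`, which is finite because `β < d`.
-/

open MeasureTheory Metric Module

variable {E : Type*} [NormedAddCommGroup E]

noncomputable def stableProfile (d α t : ℝ) (u : E) : ℝ :=
  min (t ^ (-d / α)) (t / ‖u‖ ^ (α + d))

section Profile

variable {d α t : ℝ}

lemma stableProfile_nonneg (ht : 0 ≤ t) (u : E) : 0 ≤ stableProfile d α t u :=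
  le_min (Real.rpow_nonneg ht _) (div_nonneg ht (Real.rpow_nonneg (norm_nonneg _) _))

lemma measurable_stableProfile [MeasurableSpace E] [OpensMeasurableSpace E] :
    Measurable (stableProfile (E := E) d α t) :=
  measurable_const.min (measurable_const.div (measurable_norm.pow_const _))

lemma stableProfile_one (u : E) : stableProfile d α 1 u = min 1 (‖u‖ ^ (-(α + d))) := by
  simp only [stableProfile, Real.one_rpow, one_div, Real.rpow_neg (norm_nonneg u)]

lemma stableProfile_one_le_one (u : E) : stableProfile d α 1 u ≤ 1 := by
  rw [stableProfile_one]
  exact min_le_left _ _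

lemma stableProfile_one_le_rpow_one_add_norm (hs : 0 ≤ α + d) (u : E) :
    stableProfile d α 1 u ≤ 2 ^ (α + d) * (1 + ‖u‖) ^ (-(α + d)) := by
  rw [stableProfile_one]
  rcases le_total ‖u‖ 1 with hu | hu
  · calc min 1 (‖u‖ ^ (-(α + d))) ≤ 1 := min_le_left _ _
      _ = 2 ^ (α + d) * 2 ^ (-(α + d)) := by
        rw [← Real.rpow_add two_pos, add_neg_cancel, Real.rpow_zero]
      _ ≤ 2 ^ (α + d) * (1 + ‖u‖) ^ (-(α + d)) := by
        refine mul_le_mul_of_nonneg_left ?_ (by positivity)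
        exact Real.rpow_le_rpow_of_nonpos (by positivity) (by linarith) (by linarith)
  · calc min 1 (‖u‖ ^ (-(α + d))) ≤ ‖u‖ ^ (-(α + d)) := min_le_right _ _
      _ = 2 ^ (α + d) * (2 * ‖u‖) ^ (-(α + d)) := by
        rw [Real.mul_rpow zero_le_two (norm_nonneg _), ← mul_assoc, ← Real.rpow_add two_pos,
          add_neg_cancel, Real.rpow_zero, one_mul]
      _ ≤ 2 ^ (α + d) * (1 + ‖u‖) ^ (-(α + d)) := by
        refine mul_le_mul_of_nonneg_left ?_ (by positivity)
        exact Real.rpow_le_rpow_of_nonpos (by positivity) (by linarith) (by linarith)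

variable [NormedSpace ℝ E]

lemma rpow_neg_norm_eq_mul_rpow_neg_norm_inv_smul {r β : ℝ} (hr : 0 < r) (v : E) :
    ‖v‖ ^ (-β) = r ^ (-β) * ‖r⁻¹ • v‖ ^ (-β) := by
  rw [norm_smul, Real.norm_of_nonneg (inv_nonneg.2 hr.le),
    Real.mul_rpow (inv_nonneg.2 hr.le) (norm_nonneg _), ← mul_assoc, Real.inv_rpow hr.le,
    mul_inv_cancel₀ (Real.rpow_pos_of_pos hr _).ne', one_mul]

lemma stableProfile_eq_mul_stableProfile_one (hα : α ≠ 0) (ht : 0 < t) (u : E) :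
    stableProfile d α t u = t ^ (-d / α) * stableProfile d α 1 ((t ^ α⁻¹)⁻¹ • u) := by
  have hr : 0 < t ^ α⁻¹ := Real.rpow_pos_of_pos ht _
  have hscale : t ^ (-d / α) * ‖(t ^ α⁻¹)⁻¹ • u‖ ^ (-(α + d)) = t / ‖u‖ ^ (α + d) := by
    rw [norm_smul, Real.norm_of_nonneg (inv_nonneg.2 hr.le),
      Real.mul_rpow (inv_nonneg.2 hr.le) (norm_nonneg _), Real.inv_rpow hr.le,
      ← Real.rpow_neg hr.le, neg_neg, ← Real.rpow_mul ht.le, ← mul_assoc, ← Real.rpow_add ht,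
      Real.rpow_neg (norm_nonneg _), ← div_eq_mul_inv]
    congr 1
    convert Real.rpow_one t using 2
    field_simp
    ring
  rw [stableProfile_one, mul_min_of_nonneg _ _ (Real.rpow_nonneg ht.le _), mul_one, hscale,
    stableProfile]

end Profile

variable [NormedSpace ℝ E] [FiniteDimensional ℝ E] [MeasurableSpace E] [BorelSpace E]
  {μ : Measure E} [μ.IsAddHaarMeasure]

lemma integrable_stableProfile_one {d α : ℝ} (h : (finrank ℝ E : ℝ) < α + d) :
    Integrable (stableProfile d α 1) μ := by
  refine ((integrable_one_add_norm h).const_mul (2 ^ (α + d))).mono'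
    measurable_stableProfile.aestronglyMeasurable (ae_of_all _ fun u => ?_)
  rw [Real.norm_of_nonneg (stableProfile_nonneg zero_le_one u)]
  exact stableProfile_one_le_rpow_one_add_norm (by linarith [(finrank ℝ E).cast_nonneg (α := ℝ)]) u

lemma integral_integral_comp_inv_smul_of_nonneg {F : Type*} [NormedAddCommGroup F]
    [NormedSpace ℝ F] (G : E → E → F) {R : ℝ} (hR : 0 ≤ R) :
    ∫ y, ∫ z, G (R⁻¹ • y) (R⁻¹ • z) ∂μ ∂μ = (R ^ finrank ℝ E) ^ 2 • ∫ y, ∫ z, G y z ∂μ ∂μ := by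
  have inner (y : E) : ∫ z, G (R⁻¹ • y) (R⁻¹ • z) ∂μ = R ^ finrank ℝ E • ∫ z, G (R⁻¹ • y) z ∂μ :=
    Measure.integral_comp_inv_smul_of_nonneg μ (G (R⁻¹ • y)) hR
  simp_rw [inner, integral_smul,
    Measure.integral_comp_inv_smul_of_nonneg μ (fun y => ∫ z, G y z ∂μ) hR, smul_smul, sq]
lemma integral_mul_rpow_neg_norm_sub_le {g : E → ℝ} {A β : ℝ} (hg : Integrable g μ)
    (hg0 : 0 ≤ g) (hgA : ∀ u, g u ≤ A) (hβ : 0 ≤ β) (hβd : β < finrank ℝ E) (y w : E) :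
    ∫ z, g (w - z) * ‖y - z‖ ^ (-β) ∂μ ≤ A * ∫ u in ball 0 1, ‖u‖ ^ (-β) ∂μ + ∫ u, g u ∂μ := by
  have hK : IntegrableOn (fun u : E => ‖u‖ ^ (-β)) (ball 0 1) μ :=
    integrableOn_ball_of_norm_le_rpow (by exact_mod_cast (hβ.trans_lt hβd)) hβd
      (ae_of_all _ fun u => by rw [one_mul, Real.norm_of_nonneg (Real.rpow_nonneg (norm_nonneg _) _)])
      (measurable_norm.pow_const _).aestronglyMeasurable
  set k := (ball (0 : E) 1).indicator fun u => ‖u‖ ^ (-β) with hk_def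
  have hk : Integrable k μ := hK.integrable_indicator measurableSet_ball
  have hpt (z : E) : g (w - z) * ‖y - z‖ ^ (-β) ≤ A * k (y - z) + g (w - z) := by
    by_cases hyz : y - z ∈ ball (0 : E) 1
    · rw [hk_def, Set.indicator_of_mem hyz]
      exact le_add_of_le_of_nonneg
        (mul_le_mul_of_nonneg_right (hgA _) (Real.rpow_nonneg (norm_nonneg _) _)) (hg0 _)
    · have h1 : 1 ≤ ‖y - z‖ := by simpa using hyz
      rw [hk_def, Set.indicator_of_notMem hyz, mul_zero, zero_add]
      exact mul_le_of_le_one_right (hg0 _) (Real.rpow_le_one_of_one_le_of_nonpos h1 (by linarith))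
  calc ∫ z, g (w - z) * ‖y - z‖ ^ (-β) ∂μ ≤ ∫ z, (A * k (y - z) + g (w - z)) ∂μ :=
        integral_mono_of_nonneg
          (ae_of_all _ fun z => mul_nonneg (hg0 _) (Real.rpow_nonneg (norm_nonneg _) _))
          (((hk.comp_sub_left y).const_mul A).add (hg.comp_sub_left w)) (ae_of_all _ hpt)
    _ = A * ∫ u in ball 0 1, ‖u‖ ^ (-β) ∂μ + ∫ u, g u ∂μ := by
        rw [integral_add ((hk.comp_sub_left y).const_mul A) (hg.comp_sub_left w),
          integral_const_mul, integral_sub_left_eq_self k, integral_sub_left_eq_self g,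
          integral_indicator measurableSet_ball]

lemma integral_integral_mul_rpow_neg_norm_sub_le {f g : E → ℝ} {A β : ℝ} (hf : Integrable f μ)
    (hf0 : 0 ≤ f) (hg : Integrable g μ) (hg0 : 0 ≤ g) (hgA : ∀ u, g u ≤ A) (hβ : 0 ≤ β)
    (hβd : β < finrank ℝ E) (x w : E) :
    ∫ y, ∫ z, f (x - y) * g (w - z) * ‖y - z‖ ^ (-β) ∂μ ∂μ ≤
      (∫ u, f u ∂μ) * (A * ∫ u in ball 0 1, ‖u‖ ^ (-β) ∂μ + ∫ u, g u ∂μ) := by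
  set c := A * ∫ u in ball 0 1, ‖u‖ ^ (-β) ∂μ + ∫ u, g u ∂μ
  have inner (y : E) : ∫ z, f (x - y) * g (w - z) * ‖y - z‖ ^ (-β) ∂μ =
      f (x - y) * ∫ z, g (w - z) * ‖y - z‖ ^ (-β) ∂μ := by
    simp_rw [mul_assoc]
    exact integral_const_mul _ _
  calc ∫ y, ∫ z, f (x - y) * g (w - z) * ‖y - z‖ ^ (-β) ∂μ ∂μ
      = ∫ y, f (x - y) * ∫ z, g (w - z) * ‖y - z‖ ^ (-β) ∂μ ∂μ := by simp_rw [inner]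
    _ ≤ ∫ y, f (x - y) * c ∂μ :=
        integral_mono_of_nonneg
          (ae_of_all _ fun y => mul_nonneg (hf0 _) (integral_nonneg fun z =>
            mul_nonneg (hg0 _) (Real.rpow_nonneg (norm_nonneg _) _)))
          ((hf.comp_sub_left x).mul_const c)
          (ae_of_all _ fun y => mul_le_mul_of_nonneg_left
            (integral_mul_rpow_neg_norm_sub_le hg hg0 hgA hβ hβd y w) (hf0 _))
    _ = (∫ u, f u ∂μ) * c := by rw [integral_mul_const, integral_sub_left_eq_self f]

lemma integral_integral_stableProfile_mul_rpow_neg_norm_sub_eq {α β t : ℝ} (hα : α ≠ 0)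
    (ht : 0 < t) (x w : E) :
    ∫ y, ∫ z, stableProfile (finrank ℝ E) α t (x - y) * stableProfile (finrank ℝ E) α t (w - z) *
        ‖y - z‖ ^ (-β) ∂μ ∂μ =
      t ^ (-β / α) * ∫ y, ∫ z, stableProfile (finrank ℝ E) α 1 ((t ^ α⁻¹)⁻¹ • x - y) *
        stableProfile (finrank ℝ E) α 1 ((t ^ α⁻¹)⁻¹ • w - z) * ‖y - z‖ ^ (-β) ∂μ ∂μ := by
  set n : ℝ := (finrank ℝ E : ℝ)
  set r := t ^ α⁻¹
  have hr : 0 < r := Real.rpow_pos_of_pos ht _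
  have hpt (y z : E) : stableProfile n α t (x - y) * stableProfile n α t (w - z) * ‖y - z‖ ^ (-β) =
      t ^ (-n / α) * t ^ (-n / α) * r ^ (-β) *
        (stableProfile n α 1 (r⁻¹ • x - r⁻¹ • y) * stableProfile n α 1 (r⁻¹ • w - r⁻¹ • z) *
          ‖r⁻¹ • y - r⁻¹ • z‖ ^ (-β)) := by
    rw [stableProfile_eq_mul_stableProfile_one hα ht, stableProfile_eq_mul_stableProfile_one hα ht,
      rpow_neg_norm_eq_mul_rpow_neg_norm_inv_smul hr, smul_sub, smul_sub, smul_sub]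
    ring
  have hconst : t ^ (-n / α) * t ^ (-n / α) * r ^ (-β) * (r ^ finrank ℝ E) ^ 2 = t ^ (-β / α) := by
    rw [← pow_mul, ← Real.rpow_natCast, ← Real.rpow_mul ht.le, ← Real.rpow_mul ht.le,
      ← Real.rpow_add ht, ← Real.rpow_add ht, ← Real.rpow_add ht]
    congr 1
    field_simp
    push_cast
    ring
  simp_rw [hpt, integral_const_mul]
  rw [integral_integral_comp_inv_smul_of_nonneg (fun y z => stableProfile n α 1 (r⁻¹ • x - y) *
      stableProfile n α 1 (r⁻¹ • w - z) * ‖y - z‖ ^ (-β)) hr.le, smul_eq_mul, ← mul_assoc, hconst]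

theorem integral_integral_stableProfile_mul_rpow_neg_norm_sub_le {α β t : ℝ} (hα : 0 < α)
    (hβ : 0 ≤ β) (hβd : β < finrank ℝ E) (ht : 0 < t) (x w : E) :
    ∫ y, ∫ z, stableProfile (finrank ℝ E) α t (x - y) * stableProfile (finrank ℝ E) α t (w - z) *
        ‖y - z‖ ^ (-β) ∂μ ∂μ ≤
      (∫ u, stableProfile (finrank ℝ E) α 1 u ∂μ) *
        (∫ u in ball 0 1, ‖u‖ ^ (-β) ∂μ + ∫ u, stableProfile (finrank ℝ E) α 1 u ∂μ) *
        t ^ (-β / α) := by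
  have hp : Integrable (stableProfile (finrank ℝ E) α 1) μ :=
    integrable_stableProfile_one (by linarith)
  have hp0 : 0 ≤ stableProfile (E := E) (finrank ℝ E) α 1 := stableProfile_nonneg zero_le_one
  have h1 := integral_integral_mul_rpow_neg_norm_sub_le (μ := μ) hp hp0 hp hp0
    stableProfile_one_le_one hβ hβd ((t ^ α⁻¹)⁻¹ • x) ((t ^ α⁻¹)⁻¹ • w)
  rw [one_mul] at h1
  rw [integral_integral_stableProfile_mul_rpow_neg_norm_sub_eq hα.ne' ht, mul_comm]
  exact mul_le_mul_of_nonneg_right h1 (Real.rpow_nonneg ht.le _)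

theorem stable_riesz_double_integral_upper_general (d : ℕ) (α β : ℝ)
    (hα : α ∈ Set.Ioo (1 : ℝ) 2) (hβ : 0 < β) (hβd : β < d) :
    ∃ C : ℝ, 0 < C ∧
      ∀ t : ℝ, 0 < t → ∀ x w : EuclideanSpace ℝ (Fin d),
        (∫ y : EuclideanSpace ℝ (Fin d), ∫ z : EuclideanSpace ℝ (Fin d),
            min (t ^ (-(d : ℝ) / α)) (t / ‖x - y‖ ^ (α + (d : ℝ))) *
              min (t ^ (-(d : ℝ) / α)) (t / ‖w - z‖ ^ (α + (d : ℝ))) * ‖y - z‖ ^ (-β)) ≤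
          C * t ^ (-β / α) := by
  set M := ∫ u : EuclideanSpace ℝ (Fin d), stableProfile d α 1 u
  set K := ∫ u in ball (0 : EuclideanSpace ℝ (Fin d)) 1, ‖u‖ ^ (-β)
  refine ⟨max (M * (K + M)) 1, lt_max_of_lt_right one_pos, fun t ht x w => ?_⟩
  have h := integral_integral_stableProfile_mul_rpow_neg_norm_sub_le (μ := volume)
    (zero_lt_one.trans hα.1) hβ.le (by rwa [finrank_euclideanSpace_fin]) ht x w
  rw [finrank_euclideanSpace_fin] at h
  exact h.trans (mul_le_mul_of_nonneg_right (le_max_left _ _) (Real.rpow_nonneg ht.le _))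

/-- Upper bound for the Riesz-kernel-smeared product of two α-stable kernel
profiles: there is `C > 0` such that for all `t > 0` and `x, w ∈ ℝ^d`,
`∫∫ min(t^(-d/α), t/|x-y|^(α+d)) min(t^(-d/α), t/|w-z|^(α+d)) |y-z|^(-β) dy dz
  ≤ C t^(-β/α)`. -/
theorem stable_riesz_double_integral_upper (d : ℕ) (hd : 1 ≤ d) (α β : ℝ)
    (hα : α ∈ Set.Ioo (1 : ℝ) 2) (hβ : 0 < β) (hβd : β < d) :
    ∃ C : ℝ, 0 < C ∧
      ∀ t : ℝ, 0 < t → ∀ x w : EuclideanSpace ℝ (Fin d),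
        (∫ y : EuclideanSpace ℝ (Fin d), ∫ z : EuclideanSpace ℝ (Fin d),
            min (t ^ (-(d : ℝ) / α)) (t / ‖x - y‖ ^ (α + (d : ℝ))) *
              min (t ^ (-(d : ℝ) / α)) (t / ‖w - z‖ ^ (α + (d : ℝ))) * ‖y - z‖ ^ (-β)) ≤
          C * t ^ (-β / α) :=
  stable_riesz_double_integral_upper_general d α β hα hβ hβd
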